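/- Let N ≤ N_R be positive integers and let p(t, a) = Σ_{n=0}^∞ A_n(a) Σ_{m=0}^n binom(n,m) (−1)^m t^{N+n−m−1} e^{−t}/(N+n−m−1)! for t > 0 and a ∈ ℝ. Then for every t > 0 and a ∈ ℝ, a · ∂_a p^{(1)}(t, a) = ( 2 − N_R + (2 − 2N − N_R − a + N·N_R + N·a)/t ) · p(t, a) + ( 4 − 2N − N_R − a + t + (2 + N² − 3N)/t ) · p^{(1)}(t, a) + ( 1 − N + t ) · p^{(2)}(t, a), where ∂_a denotes the partial derivative with respect to a of the function a ↦ p^{(1)}(t, a). -/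

import Mathlib

/-- Pochhammer symbol `(x)ₙ = x (x+1) ⋯ (x+n-1)`. -/
noncomputable def poch (x : ℝ) (n : ℕ) : ℝ := ∏ i ∈ Finset.range n, (x + i)

/-- `A_n(a) = ((N)_n/(N_R)_n) aⁿ/n!`. -/
noncomputable def Acoef (N NR : ℕ) (a : ℝ) (n : ℕ) : ℝ :=
  (poch N n / poch NR n) * a ^ n / (n.factorial : ℝ)

/-- The (normalized) ZF SNR density
`p(t,a) = Σ_n A_n(a) Σ_{m=0}^n C(n,m) (−1)^m t^{N+n−m−1} e^{−t}/(N+n−m−1)!`. -/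
noncomputable def pdfZF (N NR : ℕ) (t a : ℝ) : ℝ :=
  ∑' n : ℕ, Acoef N NR a n *
    ∑ m ∈ Finset.range (n + 1),
      (n.choose m : ℝ) * (-1 : ℝ) ^ m * t ^ (N + n - m - 1) * Real.exp (-t)
        / ((N + n - m - 1).factorial : ℝ)

/-!
Write `b k t = t ^ k * exp (-t) / k!`, extended by zero to negative `k`, and `Δ` for the forward
difference in `k`. The inner sum of `p` is `Δⁿ b (N - 1)`, so `p = ∑ Aₙ Δⁿ b (N - 1)`. Because
`∂ₜ b k = b (k - 1) - b k` and `t * b k = (k + 1) * b (k + 1)`, every `t`-derivative of a term is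
again an iterated difference, and the Leibniz rule for `Δⁿ (k * f k)` gives linear relations
between them: a lowering relation and a second order differential equation in `t`. On the other
side `a ∂ₐ` multiplies the `n`-th term by `n`, and `a Aₙ = Aₙ₊₁ (n + 1) (N_R + n) / (N + n)`;
after shifting the index by one the identity then holds term by term. Since `|Δⁿ b| ≤ 2ⁿ` for
`t ≥ 0` and `|Aₙ| ≤ |a|ⁿ / n!`, all the series are dominated by exponential series `C Rⁿ / n!`
locally uniformly, which justifies differentiating them termwise.
-/

open Finset Function

lemma fwdDiff_iter_succ_apply {M G : Type*} [AddCommMonoid M] [AddCommGroup G] (h : M)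
    (f : M → G) (n : ℕ) (y : M) :
    (fwdDiff h)^[n + 1] f y = (fwdDiff h)^[n] f (y + h) - (fwdDiff h)^[n] f y := by
  rw [iterate_succ_apply']
  rfl

lemma fwdDiff_iter_succ_intCast_mul {R : Type*} [CommRing R] (f : ℤ → R) (n : ℕ) (y : ℤ) :
    (fwdDiff 1)^[n + 1] (fun k : ℤ => (k : R) * f k) y
      = (y + n + 1) * (fwdDiff 1)^[n + 1] f y + (n + 1) * (fwdDiff 1)^[n] f y := by
  induction n generalizing y with
  | zero => simp only [zero_add, iterate_one, iterate_zero, id, fwdDiff]; push_cast; ring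
  | succ n ih =>
    rw [fwdDiff_iter_succ_apply, ih, ih, fwdDiff_iter_succ_apply 1 f (n + 1) y]
    push_cast
    linear_combination (-(n : R) - 1) * fwdDiff_iter_succ_apply 1 f n y

-- Extending by zero to `k < 0` makes `∂ₜ b k = b (k - 1) - b k` hold for every `k`.
noncomputable def poissonTerm (k : ℤ) (t : ℝ) : ℝ :=
  if 0 ≤ k then t ^ k.toNat * Real.exp (-t) / (k.toNat).factorial else 0

lemma poissonTerm_natCast (k : ℕ) (t : ℝ) :
    poissonTerm k t = t ^ k * Real.exp (-t) / k.factorial := by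
  simp [poissonTerm]

lemma poissonTerm_of_neg {k : ℤ} (hk : k < 0) (t : ℝ) : poissonTerm k t = 0 := by
  simp [poissonTerm, not_le.2 hk]

lemma mul_poissonTerm (k : ℤ) (t : ℝ) :
    t * poissonTerm k t = (k + 1) * poissonTerm (k + 1) t := by
  rcases lt_trichotomy k (-1) with hk | rfl | hk
  · rw [poissonTerm_of_neg (by omega), poissonTerm_of_neg (by omega)]
    ring
  · simp [poissonTerm_of_neg]
  · lift k to ℕ using (by omega)
    rw [show (k : ℤ) + 1 = ((k + 1 : ℕ) : ℤ) by push_cast; ring, poissonTerm_natCast,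
      poissonTerm_natCast, Nat.factorial_succ]
    push_cast
    field_simp
    ring

lemma poissonTerm_nonneg (k : ℤ) {t : ℝ} (ht : 0 ≤ t) : 0 ≤ poissonTerm k t := by
  unfold poissonTerm
  split_ifs <;> positivity

lemma poissonTerm_le_one (k : ℤ) {t : ℝ} (ht : 0 ≤ t) : poissonTerm k t ≤ 1 := by
  unfold poissonTerm
  split_ifs
  · rw [mul_div_right_comm, ← le_div_iff₀ (Real.exp_pos _), Real.exp_neg, div_inv_eq_mul,
      one_mul]
    exact Real.pow_div_factorial_le_exp t ht _
  · exact zero_le_one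

lemma hasDerivAt_poissonTerm (k : ℤ) (t : ℝ) :
    HasDerivAt (poissonTerm k) (poissonTerm (k - 1) t - poissonTerm k t) t := by
  rcases lt_or_ge k 0 with hk | hk
  · rw [poissonTerm_of_neg hk, poissonTerm_of_neg (by omega), sub_zero,
      show poissonTerm k = fun _ => 0 from funext (poissonTerm_of_neg hk)]
    exact hasDerivAt_const t 0
  lift k to ℕ using hk
  have hexp : HasDerivAt (fun s : ℝ => Real.exp (-s)) (-Real.exp (-t)) t := by
    simpa using (hasDerivAt_neg t).exp
  have hterm := ((hasDerivAt_pow k t).fun_mul hexp).div_const (k.factorial : ℝ)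
  rw [show poissonTerm k = fun s => s ^ k * Real.exp (-s) / k.factorial from
    funext (poissonTerm_natCast k)]
  refine hterm.congr_deriv ?_
  rcases k with _ | k
  · simp [poissonTerm_of_neg]
  · rw [show ((k + 1 : ℕ) : ℤ) - 1 = k by push_cast; ring, poissonTerm_natCast,
      Nat.factorial_succ]
    push_cast
    field_simp
    ring

noncomputable def poissonDiff (n : ℕ) (m : ℤ) (t : ℝ) : ℝ :=
  (fwdDiff 1)^[n] (fun k => poissonTerm k t) m

lemma poissonDiff_zero (m : ℤ) (t : ℝ) : poissonDiff 0 m t = poissonTerm m t := rfl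

lemma poissonDiff_succ (n : ℕ) (m : ℤ) (t : ℝ) :
    poissonDiff (n + 1) m t = poissonDiff n (m + 1) t - poissonDiff n m t :=
  fwdDiff_iter_succ_apply 1 _ n m

lemma mul_poissonDiff_succ (n : ℕ) (m : ℤ) (t : ℝ) :
    t * poissonDiff (n + 1) m t
      = (m + n + 2) * poissonDiff (n + 1) (m + 1) t + (n + 1) * poissonDiff n (m + 1) t := by
  have hshift : (t • fun k => poissonTerm k t)
      = fun k => (fun j : ℤ => (j : ℝ) * poissonTerm j t) (k + 1) := by
    funext k
    rw [Pi.smul_apply, smul_eq_mul, mul_poissonTerm]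
    push_cast
    rfl
  unfold poissonDiff
  rw [← smul_eq_mul, ← Pi.smul_apply, ← fwdDiff_iter_const_smul, hshift,
    fwdDiff_iter_comp_add 1 (fun j : ℤ => (j : ℝ) * poissonTerm j t) 1,
    fwdDiff_iter_succ_intCast_mul]
  push_cast
  ring

lemma hasDerivAt_poissonDiff (n : ℕ) (m : ℤ) (t : ℝ) :
    HasDerivAt (poissonDiff n m) (-poissonDiff (n + 1) (m - 1) t) t := by
  induction n generalizing m with
  | zero =>
    rw [poissonDiff_succ, sub_add_cancel, neg_sub]
    exact hasDerivAt_poissonTerm m t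
  | succ n ih =>
    rw [show poissonDiff (n + 1) m = fun s => poissonDiff n (m + 1) s - poissonDiff n m s from
      funext (poissonDiff_succ n m)]
    refine ((ih (m + 1)).sub (ih m)).congr_deriv ?_
    rw [poissonDiff_succ (n + 1), add_sub_cancel_right, sub_add_cancel]
    ring

lemma abs_poissonDiff_le (n : ℕ) (m : ℤ) {t : ℝ} (ht : 0 ≤ t) :
    |poissonDiff n m t| ≤ 2 ^ n := by
  induction n generalizing m with
  | zero =>
    rw [poissonDiff_zero, pow_zero, abs_of_nonneg (poissonTerm_nonneg m ht)]
    exact poissonTerm_le_one m ht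
  | succ n ih =>
    rw [poissonDiff_succ, pow_succ, mul_two]
    exact (abs_sub _ _).trans (add_le_add (ih _) (ih _))

-- With `s = poissonDiff n m`, its `t`-derivatives are `s' = -poissonDiff (n + 1) (m - 1)` and
-- `s'' = poissonDiff (n + 2) (m - 1 - 1)`, so this is `t s'' + (t + 1 - m) s' + (n + 1) s = 0`.
lemma poissonDiff_ode (n : ℕ) (m : ℤ) (t : ℝ) :
    t * poissonDiff (n + 2) (m - 1 - 1) t - (t + 1 - m) * poissonDiff (n + 1) (m - 1) t
      + (n + 1) * poissonDiff n m t = 0 := by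
  have h1 := mul_poissonDiff_succ (n + 1) (m - 1 - 1) t
  have h2 := mul_poissonDiff_succ n (m - 1) t
  have h3 := poissonDiff_succ (n + 1) (m - 1) t
  rw [sub_add_cancel] at h1 h2 h3
  push_cast at h1 h2
  linear_combination h1 - h2 + ((m : ℝ) + n + 1) * h3

lemma poissonDiff_lowering (n : ℕ) (m : ℤ) (t : ℝ) :
    t * poissonDiff (n + 2) (m - 1) t + (m + n + 1 - t) * poissonDiff (n + 1) m t
      + (n + 1) * poissonDiff n m t = 0 := by
  have h1 := mul_poissonDiff_succ (n + 1) (m - 1) t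
  have h2 := mul_poissonDiff_succ n m t
  have h3 := poissonDiff_succ (n + 1) m t
  have h4 := poissonDiff_succ n m t
  rw [sub_add_cancel] at h1
  push_cast at h1 h2
  linear_combination h1 - h2 + ((m : ℝ) + n + 2) * h3 + ((n : ℝ) + 1) * h4

lemma poissonDiff_lowering_zero (m : ℤ) (t : ℝ) :
    t * poissonDiff 1 (m - 1) t + (m - t) * poissonDiff 0 m t = 0 := by
  have h1 := mul_poissonDiff_succ 0 (m - 1) t
  have h2 := mul_poissonTerm m t
  have h3 := poissonDiff_succ 0 m t
  rw [sub_add_cancel] at h1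
  push_cast at h1 h2
  simp only [zero_add, poissonDiff_zero] at h1 h3 ⊢
  linear_combination h1 - h2 + ((m : ℝ) + 1) * h3

lemma summable_mul_pow_div_factorial (C R : ℝ) :
    Summable fun n : ℕ => C * R ^ n / n.factorial :=
  ((Real.summable_pow_div_factorial R).mul_left C).congr fun _ => (mul_div_assoc _ _ _).symm

lemma summable_of_abs_le_pow_div_factorial {f : ℕ → ℝ} {C R : ℝ}
    (h : ∀ n, |f n| ≤ C * R ^ n / n.factorial) : Summable f :=
  .of_norm_bounded (summable_mul_pow_div_factorial C R) h

noncomputable def poissonSeries (c : ℕ → ℝ) (j : ℕ) (m : ℤ) (t : ℝ) : ℝ :=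
  ∑' n, c n * poissonDiff (n + j) m t

section poissonSeries

variable {c : ℕ → ℝ} {C R : ℝ}

lemma abs_mul_poissonDiff_le (hc : ∀ n, |c n| ≤ C * R ^ n / n.factorial)
    (j n : ℕ) (m : ℤ) {t : ℝ} (ht : 0 ≤ t) :
    |c n * poissonDiff (n + j) m t| ≤ C * 2 ^ j * (2 * R) ^ n / n.factorial := by
  rw [abs_mul]
  calc |c n| * |poissonDiff (n + j) m t| ≤ C * R ^ n / n.factorial * 2 ^ (n + j) :=
        mul_le_mul (hc n) (abs_poissonDiff_le _ m ht) (abs_nonneg _)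
          ((abs_nonneg _).trans (hc n))
    _ = C * 2 ^ j * (2 * R) ^ n / n.factorial := by ring

lemma summable_mul_poissonDiff (hc : ∀ n, |c n| ≤ C * R ^ n / n.factorial)
    (j : ℕ) (m : ℤ) {t : ℝ} (ht : 0 ≤ t) :
    Summable fun n => c n * poissonDiff (n + j) m t :=
  summable_of_abs_le_pow_div_factorial fun n => abs_mul_poissonDiff_le hc j n m ht

lemma hasDerivAt_poissonSeries (hc : ∀ n, |c n| ≤ C * R ^ n / n.factorial)
    (j : ℕ) (m : ℤ) {t : ℝ} (ht : 0 < t) :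
    HasDerivAt (poissonSeries c j m) (-poissonSeries c (j + 1) (m - 1) t) t := by
  have hderiv := hasDerivAt_tsum_of_isPreconnected
    (summable_mul_pow_div_factorial (C * 2 ^ (j + 1)) (2 * R)) isOpen_Ioi isPreconnected_Ioi
    (fun n y _ => (hasDerivAt_poissonDiff (n + j) m y).const_mul (c n))
    (fun n y hy => by
      rw [Real.norm_eq_abs, mul_neg, abs_neg]
      exact abs_mul_poissonDiff_le hc (j + 1) n (m - 1) (le_of_lt hy))
    ht (summable_mul_poissonDiff hc j m ht.le) ht
  refine hderiv.congr_deriv ?_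
  simp only [mul_neg, tsum_neg, poissonSeries, add_assoc]

end poissonSeries

lemma pdfZF_inner_sum_eq_poissonDiff {N : ℕ} (hN : 0 < N) (n : ℕ) (t : ℝ) :
    ∑ m ∈ Finset.range (n + 1),
        (n.choose m : ℝ) * (-1 : ℝ) ^ m * t ^ (N + n - m - 1) * Real.exp (-t)
          / ((N + n - m - 1).factorial : ℝ)
      = poissonDiff n (N - 1) t := by
  rw [poissonDiff, fwdDiff_iter_eq_sum_shift, ← sum_range_reflect]
  refine sum_congr rfl fun k hk => ?_
  have hk : k ≤ n := Nat.lt_succ_iff.1 (mem_range.1 hk)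
  rw [show n + 1 - 1 - k = n - k by omega, Nat.choose_symm hk,
    show N + n - (n - k) - 1 = N + k - 1 by omega,
    show (N : ℤ) - 1 + k • (1 : ℤ) = ((N + k - 1 : ℕ) : ℤ) by rw [nsmul_one]; omega,
    poissonTerm_natCast, zsmul_eq_mul]
  push_cast
  ring

lemma pdfZF_eq_poissonSeries {N : ℕ} (NR : ℕ) (hN : 0 < N) (t a : ℝ) :
    pdfZF N NR t a = poissonSeries (Acoef N NR a) 0 (N - 1) t := by
  simp only [pdfZF, poissonSeries, pdfZF_inner_sum_eq_poissonDiff hN, add_zero]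

lemma poch_nonneg {x : ℝ} (hx : 0 ≤ x) (n : ℕ) : 0 ≤ poch x n :=
  prod_nonneg fun _ _ => by positivity

lemma poch_le_poch {x y : ℝ} (hx : 0 ≤ x) (hxy : x ≤ y) (n : ℕ) : poch x n ≤ poch y n :=
  prod_le_prod (fun _ _ => by positivity) fun _ _ => by linarith

lemma poch_succ (x : ℝ) (n : ℕ) : poch x (n + 1) = poch x n * (x + n) :=
  prod_range_succ _ _

lemma abs_poch_div_poch_le_one {N NR : ℕ} (hNNR : N ≤ NR) (n : ℕ) :
    |poch N n / poch NR n| ≤ 1 := by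
  have h0 := poch_nonneg N.cast_nonneg n
  have hle := poch_le_poch N.cast_nonneg (Nat.cast_le.2 hNNR) n
  rw [abs_of_nonneg (div_nonneg h0 (h0.trans hle))]
  exact div_le_one_of_le₀ hle (h0.trans hle)

lemma abs_Acoef_le {N NR : ℕ} (hNNR : N ≤ NR) (a : ℝ) (n : ℕ) :
    |Acoef N NR a n| ≤ 1 * |a| ^ n / n.factorial := by
  rw [Acoef, abs_div, abs_mul, abs_pow, Nat.abs_cast]
  gcongr
  exact abs_poch_div_poch_le_one hNNR n

lemma mul_Acoef {N NR : ℕ} (hN : 0 < N) (hNNR : N ≤ NR) (a : ℝ) (n : ℕ) :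
    a * Acoef N NR a n = Acoef N NR a (n + 1) * ((n + 1) * (NR + n) / (N + n)) := by
  have hNR : 0 < (NR : ℝ) := by exact_mod_cast hN.trans_le hNNR
  have hpoch : poch NR n ≠ 0 := (prod_pos fun _ _ => by positivity).ne'
  have hNn : (N : ℝ) + n ≠ 0 := by positivity
  have hNRn : (NR : ℝ) + n ≠ 0 := by positivity
  rw [Acoef, Acoef, poch_succ, poch_succ, Nat.factorial_succ]
  push_cast
  field_simp
  ring

lemma mul_deriv_tsum_pow_div_factorial {w : ℕ → ℝ} {C R : ℝ} (hw : ∀ n, |w n| ≤ C * R ^ n)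
    (a : ℝ) :
    a * deriv (fun x => ∑' n, w n * x ^ n / n.factorial) a
      = ∑' n, n * (w n * a ^ n / n.factorial) := by
  obtain ⟨ρ, hρ⟩ : ∃ ρ : ℝ, a ∈ Metric.ball 0 ρ := ⟨|a| + 1, by simp⟩
  have hu : Summable fun n : ℕ => C * R ^ n * (n * ρ ^ (n - 1)) / n.factorial := by
    refine (summable_nat_add_iff 1).1
      ((summable_mul_pow_div_factorial (C * R) (R * ρ)).congr fun n => ?_)
    rw [Nat.factorial_succ, add_tsub_cancel_right]
    push_cast
    field_simp
    ring
  have hsum : Summable fun n => w n * a ^ n / n.factorial := by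
    refine summable_of_abs_le_pow_div_factorial (C := C) (R := R * |a|) fun n => ?_
    rw [abs_div, abs_mul, abs_pow, Nat.abs_cast, mul_pow, ← mul_assoc]
    gcongr
    exact hw n
  have hderiv := hasDerivAt_tsum_of_isPreconnected hu Metric.isOpen_ball
    (convex_ball 0 ρ).isPreconnected
    (fun n x _ => ((hasDerivAt_pow n x).const_mul (w n)).div_const (n.factorial : ℝ))
    (fun n x hxρ => by
      have hx : |x| ≤ ρ := by simpa using (mem_ball_zero_iff.1 hxρ).le
      rw [Real.norm_eq_abs, abs_div, abs_mul, abs_mul, abs_pow, Nat.abs_cast, Nat.abs_cast]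
      gcongr
      exacts [(abs_nonneg _).trans (hw n), hw n])
    hρ hsum hρ
  rw [hderiv.deriv, ← tsum_mul_left]
  congr 1 with n
  rcases n with _ | n
  · simp
  · rw [add_tsub_cancel_right, pow_succ]
    ring

section pdfZF

variable {N NR : ℕ} {t : ℝ}

lemma deriv_pdfZF (hN : 0 < N) (hNNR : N ≤ NR) (ht : 0 < t) (a : ℝ) :
    deriv (fun t' => pdfZF N NR t' a) t = -poissonSeries (Acoef N NR a) 1 (N - 1 - 1) t := by
  simp_rw [pdfZF_eq_poissonSeries NR hN]
  exact (hasDerivAt_poissonSeries (abs_Acoef_le hNNR a) 0 _ ht).deriv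

lemma iteratedDeriv_two_pdfZF (hN : 0 < N) (hNNR : N ≤ NR) (ht : 0 < t) (a : ℝ) :
    iteratedDeriv 2 (fun t' => pdfZF N NR t' a) t
      = poissonSeries (Acoef N NR a) 2 (N - 1 - 1 - 1) t := by
  have hderiv : deriv (fun t' => pdfZF N NR t' a)
      =ᶠ[nhds t] fun s => -poissonSeries (Acoef N NR a) 1 (N - 1 - 1) s := by
    filter_upwards [Ioi_mem_nhds ht] with s hs
    exact deriv_pdfZF hN hNNR hs a
  rw [iteratedDeriv_succ, iteratedDeriv_one, hderiv.deriv_eq,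
    (hasDerivAt_poissonSeries (abs_Acoef_le hNNR a) 1 _ ht).fun_neg.deriv, neg_neg]

lemma mul_deriv_deriv_pdfZF (hN : 0 < N) (hNNR : N ≤ NR) (ht : 0 < t) (a : ℝ) :
    a * deriv (fun a' => deriv (fun t' => pdfZF N NR t' a') t) a
      = ∑' n, n * (Acoef N NR a n * -poissonDiff (n + 1) (N - 1 - 1) t) := by
  have hseries : (fun a' => deriv (fun t' => pdfZF N NR t' a') t) = fun a' =>
      ∑' n, (poch N n / poch NR n * -poissonDiff (n + 1) (N - 1 - 1) t) * a' ^ n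
        / n.factorial := by
    funext a'
    rw [deriv_pdfZF hN hNNR ht, poissonSeries, ← tsum_neg]
    congr 1 with n
    rw [Acoef]
    ring
  have hw (n : ℕ) : |poch N n / poch NR n * -poissonDiff (n + 1) (N - 1 - 1) t| ≤ 2 * 2 ^ n := by
    rw [abs_mul, abs_neg]
    exact (mul_le_mul (abs_poch_div_poch_le_one hNNR n) (abs_poissonDiff_le _ _ ht.le)
      (abs_nonneg _) zero_le_one).trans_eq (by ring)
  rw [hseries, mul_deriv_tsum_pow_div_factorial hw]
  congr 1 with n
  rw [Acoef]
  ring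

end pdfZF

noncomputable def zfRhs (N NR : ℕ) (t a p p₁ p₂ : ℝ) : ℝ :=
  (2 - (NR : ℝ) + (2 - 2 * (N : ℝ) - (NR : ℝ) - a + (N : ℝ) * (NR : ℝ) + (N : ℝ) * a) / t) * p
    + (4 - 2 * (N : ℝ) - (NR : ℝ) - a + t + (2 + (N : ℝ) ^ 2 - 3 * (N : ℝ)) / t) * p₁
    + (1 - (N : ℝ) + t) * p₂

lemma zfRhs_eq_zfRhs_zero_add (N NR : ℕ) (t a p p₁ p₂ : ℝ) :
    zfRhs N NR t a p p₁ p₂ = zfRhs N NR t 0 p p₁ p₂ + a * ((N - 1) / t * p - p₁) := by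
  unfold zfRhs
  ring

lemma zfRhs_poissonDiff_zero (N NR : ℕ) {t : ℝ} (ht : t ≠ 0) :
    zfRhs N NR t 0 (poissonDiff 0 (N - 1) t) (-poissonDiff 1 (N - 1 - 1) t)
      (poissonDiff 2 (N - 1 - 1 - 1) t) = 0 := by
  have hode := poissonDiff_ode 0 (N - 1) t
  have hlow := poissonDiff_lowering_zero (N - 1) t
  push_cast at hode hlow
  unfold zfRhs
  field_simp
  linear_combination (1 - (N : ℝ) + t) * hode + ((NR : ℝ) - 1) * hlow

-- The `(n + 1)`-st term of the final identity divided by `Aₙ₊₁`; the factor on the right is the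
-- one in `mul_Acoef`, which turns it into the `n`-th term of `a ((N - 1) / t p - p')`.
lemma zfRhs_poissonDiff_succ (N NR : ℕ) {t : ℝ} (ht : t ≠ 0) (n : ℕ) (hNn : (N : ℝ) + n ≠ 0) :
    (n + 1) * -poissonDiff (n + 2) (N - 1 - 1) t
      - zfRhs N NR t 0 (poissonDiff (n + 1) (N - 1) t) (-poissonDiff (n + 2) (N - 1 - 1) t)
          (poissonDiff (n + 3) (N - 1 - 1 - 1) t)
      = (n + 1) * (NR + n) / (N + n)
          * ((N - 1) / t * poissonDiff n (N - 1) t + poissonDiff (n + 1) (N - 1 - 1) t) := by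
  have hode := poissonDiff_ode (n + 1) (N - 1) t
  have hlow := poissonDiff_lowering n (N - 1) t
  have hsucc := poissonDiff_succ (n + 1) (N - 1 - 1) t
  rw [sub_add_cancel] at hsucc
  push_cast at hode hlow
  unfold zfRhs
  field_simp
  linear_combination -((N : ℝ) + n) * (1 - (N : ℝ) + t) * hode
    - ((NR : ℝ) + n) * ((N : ℝ) - 1) * hlow - ((n : ℝ) + 1) * ((NR : ℝ) + n) * t * hsucc

lemma zfRhs_mul_left (N NR : ℕ) (t a c p p₁ p₂ : ℝ) :
    zfRhs N NR t a (c * p) (c * p₁) (c * p₂) = c * zfRhs N NR t a p p₁ p₂ := by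
  unfold zfRhs
  ring

lemma HasSum.zfRhs {f₀ f₁ f₂ : ℕ → ℝ} {p p₁ p₂ : ℝ} (N NR : ℕ) (t a : ℝ) (h₀ : HasSum f₀ p)
    (h₁ : HasSum f₁ p₁) (h₂ : HasSum f₂ p₂) :
    HasSum (fun n => zfRhs N NR t a (f₀ n) (f₁ n) (f₂ n)) (zfRhs N NR t a p p₁ p₂) :=
  ((h₀.mul_left _).add (h₁.mul_left _)).add (h₂.mul_left _)

lemma hasSum_nat_mul_Acoef_mul_poissonDiff {N NR : ℕ} (hN : 0 < N) (hNNR : N ≤ NR) {t : ℝ}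
    (ht : 0 < t) (a : ℝ) :
    HasSum (fun n => n * (Acoef N NR a n * -poissonDiff (n + 1) (N - 1 - 1) t))
      (zfRhs N NR t a (poissonSeries (Acoef N NR a) 0 (N - 1) t)
        (-poissonSeries (Acoef N NR a) 1 (N - 1 - 1) t)
        (poissonSeries (Acoef N NR a) 2 (N - 1 - 1 - 1) t)) := by
  have hA := abs_Acoef_le hNNR a
  have hs := (summable_mul_poissonDiff hA 0 (N - 1) ht.le).hasSum
  have hg := (summable_mul_poissonDiff hA 1 (N - 1 - 1) ht.le).hasSum.neg
  have hh := (summable_mul_poissonDiff hA 2 (N - 1 - 1 - 1) ht.le).hasSum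
  let v (n : ℕ) : ℝ := n * (Acoef N NR a n * -poissonDiff (n + 1) (N - 1 - 1) t)
    - Acoef N NR a n * zfRhs N NR t 0 (poissonDiff n (N - 1) t)
        (-poissonDiff (n + 1) (N - 1 - 1) t) (poissonDiff (n + 2) (N - 1 - 1 - 1) t)
  have hshift := ((hs.mul_left ((N - 1) / t)).sub hg).mul_left a |>.congr_fun
    (g := fun n => v (n + 1)) fun n => by
      have hNn : (N : ℝ) + n ≠ 0 := by positivity
      simp only [v, add_assoc, Nat.reduceAdd, add_zero]
      push_cast
      linear_combination Acoef N NR a (n + 1) * zfRhs_poissonDiff_succ N NR ht.ne' n hNn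
        - ((N - 1) / t * poissonDiff n (N - 1) t + poissonDiff (n + 1) (N - 1 - 1) t)
          * mul_Acoef hN hNNR a n
  have hv0 : v 0 = 0 := by
    simp only [v, zero_add, CharP.cast_eq_zero, zero_mul, zero_sub,
      zfRhs_poissonDiff_zero N NR ht.ne', mul_zero, neg_zero]
  have hv := (hasSum_nat_add_iff 1).1 hshift
  rw [sum_range_one, hv0, add_zero] at hv
  rw [zfRhs_eq_zfRhs_zero_add, add_comm]
  refine (hv.add (HasSum.zfRhs N NR t 0 hs hg hh)).congr_fun fun n => ?_
  simp only [v, add_zero, ← mul_neg, zfRhs_mul_left]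
  ring

/-- For all `t > 0` and `a ∈ ℝ`:
`a ∂_a p⁽¹⁾(t,a) = (2 − N_R + (2 − 2N − N_R − a + N N_R + N a)/t) p(t,a)
 + (4 − 2N − N_R − a + t + (2 + N² − 3N)/t) p⁽¹⁾(t,a) + (1 − N + t) p⁽²⁾(t,a)`,
where `p⁽¹⁾, p⁽²⁾` are partial derivatives with respect to `t`. -/
theorem stmt12 (N NR : ℕ) (hN : 0 < N) (hNNR : N ≤ NR) :
    ∀ t : ℝ, 0 < t → ∀ a : ℝ,
      a * deriv (fun a' => deriv (fun t' => pdfZF N NR t' a') t) a =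
        (2 - (NR : ℝ)
            + (2 - 2 * (N : ℝ) - (NR : ℝ) - a + (N : ℝ) * (NR : ℝ) + (N : ℝ) * a) / t)
            * pdfZF N NR t a
          + (4 - 2 * (N : ℝ) - (NR : ℝ) - a + t + (2 + (N : ℝ) ^ 2 - 3 * (N : ℝ)) / t)
            * deriv (fun t' => pdfZF N NR t' a) t
          + (1 - (N : ℝ) + t) * iteratedDeriv 2 (fun t' => pdfZF N NR t' a) t := by
  intro t ht a
  rw [mul_deriv_deriv_pdfZF hN hNNR ht, deriv_pdfZF hN hNNR ht, iteratedDeriv_two_pdfZF hN hNNR ht,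
    pdfZF_eq_poissonSeries NR hN]
  exact (hasSum_nat_mul_Acoef_mul_poissonDiff hN hNNR ht a).tsum_eq
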